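/- arXiv:2304.02058 — 3 statements merged into one kernel-verified Lean document; each statement's English description precedes it below -/
import Mathlib

section
/- Let h : [a,b] → ℝ be continuously differentiable with h(a) ≥ 0, and suppose h'(t) ≥ d/φ for all t ∈ [a,b] with h(t) < d, where d ≥ 0 and φ > 0 and b - a ≥ φ. Then h(b) ≥ d. -/
/-! Either `h` reaches the level `d` somewhere in `[a, b]`, and then it can never fall back below
`d`, since `h' ≥ d / φ ≥ 0` whenever `h < d`; or `h < d` on all of `[a, b]`, and then `h` grows at
rate at least `d / φ` for a time `b - a ≥ φ`, starting from `h a ≥ 0`. -/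

open Set

theorem le_of_le_left_of_deriv_nonneg_below {h : ℝ → ℝ} {s b d : ℝ}
    (hcont : ContinuousOn h (Icc s b)) (hdiff : DifferentiableOn ℝ h (Ioo s b)) (hsb : s ≤ b)
    (hs : d ≤ h s) (hder : ∀ x ∈ Ioo s b, h x < d → 0 ≤ deriv h x) :
    d ≤ h b := by
  by_contra! hb
  have hclosed : IsClosed (Icc s b ∩ h ⁻¹' Ici d) :=
    hcont.preimage_isClosed_of_isClosed isClosed_Icc isClosed_Ici
  obtain ⟨t, ⟨⟨hst, htb⟩, hdt⟩, hlast⟩ :=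
    (isCompact_Icc.of_isClosed_subset hclosed inter_subset_left).exists_isGreatest
      ⟨s, ⟨le_rfl, hsb⟩, hs⟩
  have hbelow : ∀ x ∈ Ioc t b, h x < d := fun x ⟨htx, hxb⟩ =>
    not_le.1 fun hdx => (hlast ⟨⟨hst.trans htx.le, hxb⟩, hdx⟩).not_gt htx
  have hmono : MonotoneOn h (Icc t b) := by
    refine monotoneOn_of_deriv_nonneg (convex_Icc t b) (hcont.mono (Icc_subset_Icc_left hst))
      (by rw [interior_Icc]; exact hdiff.mono (Ioo_subset_Ioo_left hst)) fun x hx => ?_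
    rw [interior_Icc] at hx
    exact hder x ⟨hst.trans_lt hx.1, hx.2⟩ (hbelow x ⟨hx.1, hx.2.le⟩)
  exact hb.not_ge (hdt.trans (hmono (left_mem_Icc.2 htb) (right_mem_Icc.2 htb) htb))

/-- Recovery step of Proposition 1: if `h a ≥ 0` and `h' t ≥ d/φ` whenever `h t < d`
on `[a,b]`, with `d ≥ 0`, `φ > 0` and `b - a ≥ φ`, then `h b ≥ d`. -/
theorem stmt_1 (h : ℝ → ℝ) (a b d φ : ℝ) (hd : 0 ≤ d) (hφ : 0 < φ)
    (hab : φ ≤ b - a) (hC : ContDiff ℝ 1 h) (ha : 0 ≤ h a)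
    (hder : ∀ t ∈ Set.Icc a b, h t < d → d / φ ≤ deriv h t) :
    d ≤ h b := by
  have hdiff : Differentiable ℝ h := hC.differentiable one_ne_zero
  have hrate : 0 ≤ d / φ := div_nonneg hd hφ.le
  by_cases hreach : ∃ t ∈ Icc a b, d ≤ h t
  · obtain ⟨t, ⟨hat, htb⟩, hdt⟩ := hreach
    exact le_of_le_left_of_deriv_nonneg_below hdiff.continuous.continuousOn hdiff.differentiableOn
      htb hdt fun x hx hxd => hrate.trans (hder x ⟨hat.trans hx.1.le, hx.2.le⟩ hxd)
  · push Not at hreach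
    have hba : a ≤ b := by linarith
    have hgain := (convex_Icc a b).mul_sub_le_image_sub_of_le_deriv
      hdiff.continuous.continuousOn hdiff.differentiableOn
      (fun x hx => hder x (interior_subset hx) (hreach x (interior_subset hx)))
      a (left_mem_Icc.2 hba) b (right_mem_Icc.2 hba) hba
    calc d = d / φ * φ := (div_mul_cancel₀ d hφ.ne').symm
      _ ≤ d / φ * (b - a) := mul_le_mul_of_nonneg_left hab hrate
      _ ≤ h b - h a := hgain
      _ ≤ h b := by linarith
end

section
/- Let h : [a,b] → ℝ be continuously differentiable with h(a) ≥ 0, and suppose there exist d > 0, φ > 0, η ≥ 0 and a continuous strictly increasing α with α(0)=0 such that: (i) h'(t) ≥ d/φ whenever 0 ≤ h(t) < d, and (ii) h'(t) ≥ -α(h(t) - d) + η whenever h(t) ≥ d. Then h(t) ≥ 0 for all t ∈ [a,b], and moreover if b - a ≥ φ then there exists t' ∈ [a,b] with h(t) ≥ d for all t ∈ [t', b]. -/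
/-!
A level `ℓ ∈ [0, d)` can only be touched from above at a time where `h' ≥ d / φ > 0`, so by the
fencing theorem for derivatives every superlevel set `{h ≥ ℓ}` with `0 ≤ ℓ < d` is forward
invariant; letting `ℓ ↑ d` gives the same for `{h ≥ d}`. As long as `h` stays in `[0, d)` it grows
at rate at least `d / φ`, so it reaches `d` within time `φ`.
-/

open Set

theorem le_image_of_deriv_pos_on_level {f : ℝ → ℝ} {ℓ s b : ℝ} (hf : Differentiable ℝ f)
    (hs : ℓ ≤ f s) (hpos : ∀ t ∈ Ico s b, f t = ℓ → 0 < deriv f t) :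
    ∀ t ∈ Icc s b, ℓ ≤ f t := fun _ ht =>
  neg_le_neg_iff.mp <|
    image_le_of_deriv_right_lt_deriv_boundary (f := fun u => -f u) (B := fun _ => -ℓ)
      (B' := fun _ => 0) hf.continuous.neg.continuousOn
      (fun u _ => (hf u).hasDerivAt.neg.hasDerivWithinAt) (neg_le_neg hs)
      (fun _ => hasDerivAt_const _ _)
      (fun u hu hlevel => neg_neg_of_pos (hpos u hu (neg_inj.mp hlevel))) ht

section Superlevel

variable {h : ℝ → ℝ} {a b d φ : ℝ}

theorem le_image_of_le_of_lt_level (hdiff : Differentiable ℝ h) (hφ : 0 < φ)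
    (h1 : ∀ t ∈ Icc a b, 0 ≤ h t → h t < d → d / φ ≤ deriv h t) {ℓ s : ℝ} (hℓ0 : 0 ≤ ℓ)
    (hℓd : ℓ < d) (has : a ≤ s) (hs : ℓ ≤ h s) : ∀ t ∈ Icc s b, ℓ ≤ h t :=
  le_image_of_deriv_pos_on_level hdiff hs fun t ht hlevel =>
    (div_pos (hℓ0.trans_lt hℓd) hφ).trans_le
      (h1 t ⟨has.trans ht.1, ht.2.le⟩ (hlevel ▸ hℓ0) (hlevel ▸ hℓd))

theorem le_image_of_le_level (hdiff : Differentiable ℝ h) (hd : 0 < d) (hφ : 0 < φ)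
    (h1 : ∀ t ∈ Icc a b, 0 ≤ h t → h t < d → d / φ ≤ deriv h t) {s : ℝ} (has : a ≤ s)
    (hs : d ≤ h s) : ∀ t ∈ Icc s b, d ≤ h t := fun t ht =>
  le_of_forall_lt_imp_le_of_dense fun ℓ hℓ =>
    (le_max_left ℓ 0).trans <|
      le_image_of_le_of_lt_level hdiff hφ h1 (le_max_right ℓ 0) (max_lt hℓ hd) has
        ((max_lt hℓ hd).le.trans hs) t ht

theorem exists_le_image_of_add_le (hdiff : Differentiable ℝ h) (hd : 0 < d) (hφ : 0 < φ)
    (h1 : ∀ t ∈ Icc a b, 0 ≤ h t → h t < d → d / φ ≤ deriv h t) (ha : 0 ≤ h a)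
    (haφ : a + φ ≤ b) : ∃ t ∈ Icc a (a + φ), d ≤ h t := by
  by_contra! hbelow
  have hgrowth : ∀ t ∈ interior (Icc a (a + φ)), d / φ ≤ deriv h t := by
    rw [interior_Icc]
    intro t ht
    have htb : t ≤ b := ht.2.le.trans haφ
    exact h1 t ⟨ht.1.le, htb⟩
      (le_image_of_le_of_lt_level hdiff hφ h1 le_rfl hd le_rfl ha t ⟨ht.1.le, htb⟩)
      (hbelow t (Ioo_subset_Icc_self ht))
  have hrise := (convex_Icc a (a + φ)).mul_sub_le_image_sub_of_le_deriv
    hdiff.continuous.continuousOn hdiff.differentiableOn hgrowth a (left_mem_Icc.mpr (by linarith))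
    (a + φ) (right_mem_Icc.mpr (by linarith)) (by linarith)
  rw [add_sub_cancel_left, div_mul_cancel₀ d hφ.ne'] at hrise
  linarith [hbelow (a + φ) (right_mem_Icc.mpr (by linarith))]

end Superlevel

theorem stmt_3_general (h : ℝ → ℝ) (a b d φ : ℝ)
    (hC : ContDiff ℝ 1 h)
    (hd : 0 < d) (hφ : 0 < φ)
    (ha : 0 ≤ h a)
    (h1 : ∀ t ∈ Set.Icc a b, 0 ≤ h t → h t < d → d / φ ≤ deriv h t) :
    (∀ t ∈ Set.Icc a b, 0 ≤ h t) ∧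
      (φ ≤ b - a → ∃ t' ∈ Set.Icc a b, ∀ t ∈ Set.Icc t' b, d ≤ h t) := by
  have hdiff : Differentiable ℝ h := hC.differentiable one_ne_zero
  refine ⟨le_image_of_le_of_lt_level hdiff hφ h1 le_rfl hd le_rfl ha, fun hφba => ?_⟩
  obtain ⟨t', ht', hdt'⟩ := exists_le_image_of_add_le hdiff hd hφ h1 ha (by linarith)
  exact ⟨t', ⟨ht'.1, by linarith [ht'.2]⟩, le_image_of_le_level hdiff hd hφ h1 ht'.1 hdt'⟩

/-- Online-phase conclusion of Proposition 1: under conditions (2b)-(2c) the trajectory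
stays in `{h ≥ 0}`, and if the phase lasts at least `φ` it reaches and remains in
`{h ≥ d}`. -/
theorem stmt_3 (h : ℝ → ℝ) (a b d φ η : ℝ) (α : ℝ → ℝ)
    (hab : a ≤ b) (hC : ContDiff ℝ 1 h)
    (hd : 0 < d) (hφ : 0 < φ) (hη : 0 ≤ η)
    (hαc : Continuous α) (hαm : StrictMono α) (hα0 : α 0 = 0)
    (ha : 0 ≤ h a)
    (h1 : ∀ t ∈ Set.Icc a b, 0 ≤ h t → h t < d → d / φ ≤ deriv h t)
    (h2 : ∀ t ∈ Set.Icc a b, d ≤ h t → -α (h t - d) + η ≤ deriv h t) :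
    (∀ t ∈ Set.Icc a b, 0 ≤ h t) ∧
      (φ ≤ b - a → ∃ t' ∈ Set.Icc a b, ∀ t ∈ Set.Icc t' b, d ≤ h t) :=
  stmt_3_general h a b d φ hC hd hφ ha h1
end

section
/- Suppose h : ℝ → ℝ is continuously differentiable with h(0) = d ≥ 0, the system alternates between offline intervals of length at most τ > 0 during which h'(t) ≥ -d/τ, and online intervals of length at least φ > 0 during which h'(t) ≥ d/φ whenever h(t) < d and h'(t) ≥ 0 whenever h(t) ≥ d. Assume every offline interval begins at a time when h ≥ d. Then h(t) ≥ 0 for all t ≥ 0. -/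
/-!
During an offline interval the level falls at rate at most `d / τ` for time at most `τ`, so
starting from `h ≥ d` it stays nonnegative. During an online interval the derivative is
nonnegative whether `h` is below or above `d`, so `h` is monotone there and keeps the
nonnegative value it had when the interval was entered. A time `t ≥ 0` is handled in the
interval `[T n, T (n + 1))` where `T (n + 1)` is the first switching time exceeding `t`.
-/

open Set Filter

theorem exists_forall_le_and_lt_succ_of_tendsto_atTop {T : ℕ → ℝ}
    (hT : Tendsto T atTop atTop) {t : ℝ} (ht : T 0 ≤ t) :
    ∃ n, (∀ m ≤ n, T m ≤ t) ∧ t < T (n + 1) := by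
  have hex : ∃ n, t < T n := (hT.eventually (eventually_gt_atTop t)).exists
  obtain ⟨n, hn⟩ : ∃ n, Nat.find hex = n + 1 :=
    Nat.exists_eq_succ_of_ne_zero fun h0 => (Nat.find_spec hex).not_ge (h0 ▸ ht)
  exact ⟨n, fun m hm => not_lt.1 (Nat.find_min hex (by omega)), hn ▸ Nat.find_spec hex⟩

section

variable {f : ℝ → ℝ} {a b : ℝ}

theorem sub_le_of_neg_div_le_deriv (hf : Differentiable ℝ f) {c L : ℝ} (hc : 0 ≤ c)
    (hL : 0 < L) (hlen : b - a ≤ L) (hder : ∀ t ∈ Icc a b, -c / L ≤ deriv f t)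
    {t : ℝ} (ht : t ∈ Icc a b) : f a - c ≤ f t := by
  have hdrop : -c / L * (t - a) ≤ f t - f a :=
    (convex_Icc a b).mul_sub_le_image_sub_of_le_deriv hf.continuous.continuousOn
      hf.differentiableOn (fun x hx => hder x (interior_subset hx)) a
      (left_mem_Icc.2 (ht.1.trans ht.2)) t ht ht.1
  have hslope : c / L * (t - a) ≤ c :=
    calc c / L * (t - a) ≤ c / L * L := by gcongr; linarith [ht.2]
      _ = c := div_mul_cancel₀ c hL.ne'
  rw [neg_div, neg_mul] at hdrop
  linarith

theorem monotoneOn_Icc_of_deriv_ge_below_of_deriv_nonneg_above (hf : Differentiable ℝ f)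
    {d r : ℝ} (hr : 0 ≤ r) (hbelow : ∀ t ∈ Icc a b, f t < d → r ≤ deriv f t)
    (habove : ∀ t ∈ Icc a b, d ≤ f t → 0 ≤ deriv f t) : MonotoneOn f (Icc a b) :=
  monotoneOn_of_deriv_nonneg (convex_Icc a b) hf.continuous.continuousOn hf.differentiableOn
    fun t ht => (lt_or_ge (f t) d).elim (fun hlt => hr.trans (hbelow t (interior_subset ht) hlt))
      (habove t (interior_subset ht))

end

theorem stmt_4_general (h : ℝ → ℝ) (d τ φ : ℝ) (hd : 0 ≤ d) (hτ : 0 < τ) (hφ : 0 < φ)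
    (hC : ContDiff ℝ 1 h)
    (T : ℕ → ℝ) (hT0 : T 0 = 0)
    (hTtop : Filter.Tendsto T Filter.atTop Filter.atTop)
    (hofflen : ∀ k : ℕ, T (2 * k + 1) - T (2 * k) ≤ τ)
    (hoffstart : ∀ k : ℕ, d ≤ h (T (2 * k)))
    (hoffder : ∀ k : ℕ, ∀ t ∈ Set.Icc (T (2 * k)) (T (2 * k + 1)),
      -d / τ ≤ deriv h t)
    (honder1 : ∀ k : ℕ, ∀ t ∈ Set.Icc (T (2 * k + 1)) (T (2 * k + 2)),
      h t < d → d / φ ≤ deriv h t)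
    (honder2 : ∀ k : ℕ, ∀ t ∈ Set.Icc (T (2 * k + 1)) (T (2 * k + 2)),
      d ≤ h t → 0 ≤ deriv h t) :
    ∀ t : ℝ, 0 ≤ t → 0 ≤ h t := by
  have hf : Differentiable ℝ h := hC.differentiable one_ne_zero
  have hoff : ∀ k, ∀ t ∈ Icc (T (2 * k)) (T (2 * k + 1)), 0 ≤ h t := fun k t ht => by
    linarith [hoffstart k, sub_le_of_neg_div_le_deriv hf hd hτ (hofflen k) (hoffder k) ht]
  intro t ht
  obtain ⟨n, hle, hlt⟩ := exists_forall_le_and_lt_succ_of_tendsto_atTop hTtop (hT0 ▸ ht)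
  obtain ⟨k, rfl | rfl⟩ := Nat.even_or_odd' n
  · exact hoff k t ⟨hle _ le_rfl, hlt.le⟩
  · have hmono := monotoneOn_Icc_of_deriv_ge_below_of_deriv_nonneg_above hf
      (div_nonneg hd hφ.le) (honder1 k) (honder2 k)
    -- `T` need not be monotone, so enter the online interval at the later of `T (2k)`, `T (2k+1)`.
    have hs : 0 ≤ h (max (T (2 * k)) (T (2 * k + 1))) := by
      rcases le_total (T (2 * k)) (T (2 * k + 1)) with hmax | hmax
      · rw [max_eq_right hmax]
        exact hoff k _ ⟨hmax, le_rfl⟩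
      · rw [max_eq_left hmax]
        exact hd.trans (hoffstart k)
    have hst : max (T (2 * k)) (T (2 * k + 1)) ≤ t := max_le (hle _ (by omega)) (hle _ le_rfl)
    exact hs.trans (hmono ⟨le_max_right _ _, hst.trans hlt.le⟩ ⟨hle _ le_rfl, hlt.le⟩ hst)

/-- Safety over infinitely many fault/recovery cycles (Proposition 1 with η = 0):
`T (2k)`–`T (2k+1)` are offline intervals of length at most `τ`, each starting with
`h ≥ d`, and `T (2k+1)`–`T (2k+2)` are online intervals of length at least `φ`. -/
theorem stmt_4 (h : ℝ → ℝ) (d τ φ : ℝ) (hd : 0 ≤ d) (hτ : 0 < τ) (hφ : 0 < φ)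
    (hC : ContDiff ℝ 1 h) (h0 : h 0 = d)
    (T : ℕ → ℝ) (hT0 : T 0 = 0) (hTmono : StrictMono T)
    (hTtop : Filter.Tendsto T Filter.atTop Filter.atTop)
    (hofflen : ∀ k : ℕ, T (2 * k + 1) - T (2 * k) ≤ τ)
    (honlen : ∀ k : ℕ, φ ≤ T (2 * k + 2) - T (2 * k + 1))
    (hoffstart : ∀ k : ℕ, d ≤ h (T (2 * k)))
    (hoffder : ∀ k : ℕ, ∀ t ∈ Set.Icc (T (2 * k)) (T (2 * k + 1)),
      -d / τ ≤ deriv h t)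
    (honder1 : ∀ k : ℕ, ∀ t ∈ Set.Icc (T (2 * k + 1)) (T (2 * k + 2)),
      h t < d → d / φ ≤ deriv h t)
    (honder2 : ∀ k : ℕ, ∀ t ∈ Set.Icc (T (2 * k + 1)) (T (2 * k + 2)),
      d ≤ h t → 0 ≤ deriv h t) :
    ∀ t : ℝ, 0 ≤ t → 0 ≤ h t :=
  stmt_4_general h d τ φ hd hτ hφ hC T hT0 hTtop hofflen hoffstart hoffder honder1 honder2
end
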